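/- For all real z and α: Σ_{k=0}^∞ (-1)^k J_{10k+5}(z)·cos((10k+5)α) = (1/10)·Σ_{ℓ=0}^{4} sin(z·cos(α + 2πℓ/5)). -/

import Mathlib

/-!
`J_n(z)` is the `n`-th Fourier coefficient of the smooth `2π`-periodic function
`θ ↦ exp (i z sin θ)`; two integrations by parts make these coefficients `O(n⁻²)`, so the Fourier
series converges pointwise (Jacobi–Anger): `exp (i z sin θ) = ∑ₙ J_n(z) e^{inθ}`. Taking
`θ = φ ± π/2` gives `sin (z cos φ) = ∑ₙ J_n(z) sin (nπ/2) e^{inφ}`. Summing over the angles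
`φ = α + 2πℓ/5` kills every `n` not divisible by `5` (sums of fifth roots of unity), the factor
`sin (nπ/2)` kills the even `n`, and `J_{-n} = (-1)^n J_n` pairs `n` with `-n` into a cosine.
The surviving indices are `n = 10k + 5`, where `sin (nπ/2) = (-1)^k`.
-/

open scoped Real

/-- Bessel function of the first kind of integer order `m`,
defined by `J_m(z) = (1/2π) ∫_0^{2π} e^{i z sin θ - i m θ} dθ`. -/
noncomputable def besselJ (m : ℤ) (z : ℂ) : ℂ :=
  (1 / (2 * Real.pi)) * ∫ θ in (0:ℝ)..(2 * Real.pi),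
    Complex.exp (z * Complex.sin (θ:ℂ) * Complex.I - (m:ℂ) * (θ:ℂ) * Complex.I)

open Complex Set

theorem Function.Periodic.deriv {𝕜 F : Type*} [NontriviallyNormedField 𝕜] [NormedAddCommGroup F]
    [NormedSpace 𝕜 F] {f : 𝕜 → F} {T : 𝕜} (hf : f.Periodic T) :
    (deriv f).Periodic T := fun x => by
  rw [← deriv_comp_add_const, hf.funext]

section FourierSeries

variable {a b : ℝ} (hab : a < b) {f : ℝ → ℂ}

theorem norm_fourierCoeffOn_le {E : Type*} [NormedAddCommGroup E] [NormedSpace ℂ E] {g : ℝ → E}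
    {M : ℝ} (hM : ∀ x ∈ Icc a b, ‖g x‖ ≤ M) (n : ℤ) : ‖fourierCoeffOn hab g n‖ ≤ M := by
  have hba : 0 < b - a := sub_pos.2 hab
  rw [fourierCoeffOn_eq_integral, norm_smul, Real.norm_of_nonneg (by positivity)]
  have hint := intervalIntegral.norm_integral_le_of_norm_le_const (a := a) (b := b)
    (f := fun x => fourier (-n) (x : AddCircle (b - a)) • g x) (C := M) fun x hx => by
      rw [uIoc_of_le hab.le] at hx
      rw [norm_smul, fourier_apply, Circle.norm_coe, one_mul]
      exact hM x (Ioc_subset_Icc_self hx)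
  rw [abs_of_pos hba] at hint
  calc 1 / (b - a) * _ ≤ 1 / (b - a) * (M * (b - a)) := by gcongr
    _ = M := by field_simp

theorem fourierCoeffOn_eq_mul_fourierCoeffOn_deriv (hf : Differentiable ℝ f)
    (hf' : Continuous (deriv f)) (hfab : f a = f b) {n : ℤ} (hn : n ≠ 0) :
    fourierCoeffOn hab f n = (b - a) / (2 * π * I * n) * fourierCoeffOn hab (deriv f) n := by
  rw [fourierCoeffOn_of_hasDerivAt hab hn (fun x _ => (hf x).hasDerivAt)
    (hf'.intervalIntegrable _ _), hfab, sub_self, mul_zero, zero_sub]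
  have : (n : ℂ) ≠ 0 := Int.cast_ne_zero.2 hn
  field_simp

theorem summable_fourierCoeffOn_of_contDiff (hf : ContDiff ℝ 2 f) (hper : f.Periodic (b - a)) :
    Summable (fourierCoeffOn hab f) := by
  have hf' : ContDiff ℝ 1 (deriv f) := (contDiff_succ_iff_deriv.1 hf).2.2
  have hfab : f a = f b := by simpa using (hper a).symm
  have hf'ab : deriv f a = deriv f b := by simpa using (hper.deriv a).symm
  obtain ⟨M, hM⟩ := isCompact_Icc.exists_bound_of_continuousOn
    (hf'.continuous_deriv le_rfl).continuousOn (s := Icc a b)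
  refine .of_norm_bounded_eventually
    ((Real.summable_one_div_int_pow.2 one_lt_two).mul_left (((b - a) / (2 * π)) ^ 2 * M)) ?_
  filter_upwards [(Set.finite_singleton (0 : ℤ)).compl_mem_cofinite] with n hn
  have hn : n ≠ 0 := hn
  rw [fourierCoeffOn_eq_mul_fourierCoeffOn_deriv hab (hf.differentiable two_ne_zero)
      (hf.continuous_deriv (by norm_num)) hfab hn,
    fourierCoeffOn_eq_mul_fourierCoeffOn_deriv hab (hf'.differentiable one_ne_zero)
      (hf'.continuous_deriv le_rfl) hf'ab hn, ← mul_assoc, norm_mul]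
  have hc : ‖(b - a) / (2 * π * I * n)‖ = (b - a) / (2 * π) * (1 / |(n : ℝ)|) := by
    rw [norm_div, norm_mul, norm_mul, norm_mul, Complex.norm_I, Complex.norm_real,
      Complex.norm_ofNat, Real.norm_of_nonneg Real.pi_pos.le, Complex.norm_intCast,
      ← Complex.ofReal_sub, Complex.norm_real, Real.norm_of_nonneg (sub_pos.2 hab).le]
    field_simp
  rw [norm_mul, hc, ← sq_abs (n : ℝ)]
  calc _ ≤ ((b - a) / (2 * π) * (1 / |(n : ℝ)|)) ^ 2 * M := by
        rw [← sq]; gcongr; exact norm_fourierCoeffOn_le hab hM n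
    _ = _ := by ring

theorem hasSum_fourierCoeffOn_mul_fourier (hf : Continuous f) (hper : f.Periodic (b - a))
    (hsum : Summable (fourierCoeffOn hab f)) (x : ℝ) :
    HasSum (fun n => fourierCoeffOn hab f n * fourier n (x : AddCircle (b - a))) (f x) := by
  have : Fact (0 < b - a) := ⟨sub_pos.2 hab⟩
  let F : C(AddCircle (b - a), ℂ) := ⟨hper.lift, continuous_coinduced_dom.2 hf⟩
  have hF : fourierCoeff F = fourierCoeffOn hab f := by
    ext n
    rw [fourierCoeff_eq_intervalIntegral _ n a, fourierCoeffOn_eq_integral, add_sub_cancel]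
    simp only [F, ContinuousMap.coe_mk, hper.lift_coe]
  have h := has_pointwise_sum_fourier_series_of_summable (hF ▸ hsum : Summable (fourierCoeff F))
    (x : AddCircle (b - a))
  rw [hF] at h
  exact h

end FourierSeries

theorem besselJ_eq_fourierCoeffOn (m : ℤ) (z : ℂ) :
    besselJ m z = fourierCoeffOn Real.two_pi_pos (fun θ : ℝ => cexp (z * sin θ * I)) m := by
  rw [fourierCoeffOn_eq_integral, besselJ, sub_zero, Complex.real_smul]
  push_cast
  congr 1
  refine intervalIntegral.integral_congr fun θ _ => ?_
  rw [fourier_coe_apply, smul_eq_mul, ← Complex.exp_add]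
  congr 2
  push_cast
  field_simp
  ring

theorem hasSum_besselJ_mul_exp (z : ℂ) (θ : ℝ) :
    HasSum (fun n : ℤ => besselJ n z * cexp (n * θ * I)) (cexp (z * sin θ * I)) := by
  have hper : (fun θ : ℝ => cexp (z * sin θ * I)).Periodic (2 * π - 0) := fun θ => by
    simp [Complex.sin_add_two_pi]
  have hcd : ContDiff ℝ 2 (fun θ : ℝ => cexp (z * sin θ * I)) :=
    ((by fun_prop : ContDiff ℂ 2 fun θ : ℂ => cexp (z * sin θ * I)).restrict_scalars ℝ).comp
      ofRealCLM.contDiff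
  have h := hasSum_fourierCoeffOn_mul_fourier Real.two_pi_pos hcd.continuous hper
    (summable_fourierCoeffOn_of_contDiff Real.two_pi_pos hcd hper) θ
  convert h using 2 with n
  rw [besselJ_eq_fourierCoeffOn, fourier_coe_apply]
  congr 2
  push_cast
  field_simp
  ring

theorem besselJ_neg (n : ℤ) (z : ℂ) : besselJ (-n) z = (-1) ^ n * besselJ n z := by
  let g : ℤ → ℝ → ℂ := fun m θ => cexp (z * sin θ * I - m * θ * I)
  have hreflect : ∀ x : ℝ, g (-n) (π - x) = (-1) ^ n * g n x := fun x => by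
    rw [← Complex.exp_pi_mul_I, ← Complex.exp_int_mul, ← Complex.exp_add]
    simp only [g]
    push_cast
    rw [Complex.sin_pi_sub]
    ring_nf
  have hper : (g n).Periodic (2 * π) := fun θ => by
    simp only [g]
    push_cast
    rw [Complex.sin_add_two_pi, show z * sin θ * I - n * (θ + 2 * π) * I
      = z * sin θ * I - n * θ * I + (-n : ℤ) * (2 * π * I) by push_cast; ring,
      Complex.exp_add, Complex.exp_int_mul_two_pi_mul_I, mul_one]
  have key : ∫ θ in 0..2 * π, g (-n) θ = (-1) ^ n * ∫ θ in 0..2 * π, g n θ := by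
    calc ∫ θ in 0..2 * π, g (-n) θ = ∫ x in -π..π, g (-n) (π - x) := by
          rw [intervalIntegral.integral_comp_sub_left]; norm_num; ring_nf
      _ = (-1) ^ n * ∫ x in -π..π, g n x := by
          simp_rw [hreflect, intervalIntegral.integral_const_mul]
      _ = (-1) ^ n * ∫ θ in 0..2 * π, g n θ := by
          have h := hper.intervalIntegral_add_eq (-π) 0
          rw [zero_add, show -π + 2 * π = π by ring] at h
          rw [h]
  change 1 / (2 * π) * ∫ θ in 0..2 * π, g (-n) θ = (-1) ^ n * (1 / (2 * π) * ∫ θ in 0..2 * π, g n θ)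
  rw [key]
  ring

theorem besselJ_neg_mul_sin (n : ℤ) (z : ℂ) :
    besselJ (-n) z * Real.sin (-n * π / 2) = besselJ n z * Real.sin (n * π / 2) := by
  rw [besselJ_neg, neg_mul, neg_div, Real.sin_neg]
  rcases n.even_or_odd with ⟨m, rfl⟩ | hn
  · rw [show ((m + m : ℤ) : ℝ) * π / 2 = (m : ℤ) * π by push_cast; ring, Real.sin_int_mul_pi]
    simp
  · rw [hn.neg_one_zpow]
    push_cast
    ring

theorem hasSum_besselJ_mul_sin (z : ℂ) (φ : ℝ) :
    HasSum (fun n : ℤ => besselJ n z * Real.sin (n * π / 2) * cexp (n * φ * I))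
      (sin (z * cos φ)) := by
  have h := ((hasSum_besselJ_mul_exp z (φ + π / 2)).sub
    (hasSum_besselJ_mul_exp z (φ - π / 2))).div_const (2 * I)
  have hval : sin (z * cos φ)
      = (cexp (z * sin ↑(φ + π / 2) * I) - cexp (z * sin ↑(φ - π / 2) * I)) / (2 * I) := by
    push_cast
    rw [Complex.sin_add_pi_div_two, Complex.sin_sub_pi_div_two, Complex.sin]
    field_simp
    ring_nf
    rw [I_sq]
    ring
  rw [hval]
  refine h.congr_fun fun n => ?_
  have e₁ : cexp (n * ↑(φ + π / 2) * I) = cexp (n * φ * I) * cexp (n * π / 2 * I) := by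
    rw [← Complex.exp_add]; push_cast; ring_nf
  have e₂ : cexp (n * ↑(φ - π / 2) * I) = cexp (n * φ * I) * cexp (-(n * π / 2) * I) := by
    rw [← Complex.exp_add]; push_cast; ring_nf
  rw [e₁, e₂, Complex.ofReal_sin, Complex.sin]
  push_cast
  field_simp
  ring_nf
  rw [I_sq]
  ring

theorem sum_range_exp_two_pi_mul_I (N : ℕ) (hN : N ≠ 0) (n : ℤ) :
    ∑ ℓ ∈ Finset.range N, cexp (n * (2 * π * ℓ / N) * I) = if (N : ℤ) ∣ n then (N : ℂ) else 0 := by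
  set ζ := cexp (2 * π * I / N)
  have hζ : IsPrimitiveRoot ζ N := Complex.isPrimitiveRoot_exp N hN
  have hterm : ∀ ℓ : ℕ, cexp (n * (2 * π * ℓ / N) * I) = (ζ ^ n) ^ ℓ :=
    fun ℓ => by rw [← Complex.exp_int_mul, ← Complex.exp_nat_mul]; ring_nf
  rw [Finset.sum_congr rfl fun ℓ _ => hterm ℓ]
  split_ifs with h
  · simp [(hζ.zpow_eq_one_iff_dvd n).2 h]
  · rw [geom_sum_eq (mt (hζ.zpow_eq_one_iff_dvd n).1 h), ← zpow_natCast, ← zpow_mul, mul_comm,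
      zpow_mul, zpow_natCast, hζ.pow_eq_one, one_zpow, sub_self, zero_div]

theorem hasSum_sum_range_sin_mul_cos (z : ℂ) (α : ℝ) {N : ℕ} (hN : N ≠ 0) :
    HasSum (fun n : ℤ => if (N : ℤ) ∣ n then
        N * (besselJ n z * Real.sin (n * π / 2) * cexp (n * α * I)) else 0)
      (∑ ℓ ∈ Finset.range N, sin (z * cos ↑(α + 2 * π * ℓ / N))) := by
  refine (hasSum_sum (s := Finset.range N) fun (ℓ : ℕ) _ =>
    hasSum_besselJ_mul_sin z (α + 2 * π * ℓ / N)).congr_fun fun n => ?_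
  have hexp : ∀ ℓ : ℕ, cexp (n * ↑(α + 2 * π * ℓ / N) * I)
      = cexp (n * α * I) * cexp (n * (2 * π * ℓ / N) * I) := fun ℓ => by
    rw [← Complex.exp_add]; push_cast; ring_nf
  simp_rw [hexp, ← mul_assoc]
  rw [← Finset.mul_sum, sum_range_exp_two_pi_mul_I N hN n]
  split_ifs <;> ring

theorem hasSum_nat_sum_range_sin_mul_cos (z : ℂ) (α : ℝ) {N : ℕ} (hN : N ≠ 0) :
    HasSum (fun n : ℕ => if N ∣ n then
        2 * N * (besselJ n z * Real.sin (n * π / 2) * Real.cos (n * α)) else 0)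
      (∑ ℓ ∈ Finset.range N, sin (z * cos ↑(α + 2 * π * ℓ / N))) := by
  have h := (hasSum_sum_range_sin_mul_cos z α hN).nat_add_neg
  simp only [Int.cast_zero, zero_mul, zero_div, Real.sin_zero, Complex.ofReal_zero, mul_zero,
    zero_mul, ite_self, add_zero] at h
  refine h.congr_fun fun n => ?_
  simp only [dvd_neg, Int.natCast_dvd_natCast]
  split_ifs
  · have hsym := besselJ_neg_mul_sin n z
    simp only [Int.cast_natCast, Int.cast_neg, Complex.ofReal_cos, Complex.cos,
      Complex.ofReal_mul, Complex.ofReal_natCast, neg_mul] at hsym ⊢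
    linear_combination -(N : ℂ) * cexp (-(n * α * I)) * hsym
  · simp

theorem sin_ten_mul_add_five_mul_pi_div_two (k : ℕ) :
    Real.sin ((10 * k + 5) * π / 2) = (-1) ^ k := by
  rw [show (10 * k + 5 : ℝ) * π / 2 = π / 2 + k * π + (2 * k + 1 : ℕ) * (2 * π) by push_cast; ring,
    Real.sin_add_nat_mul_two_pi, Real.sin_add_nat_mul_pi, Real.sin_pi_div_two, mul_one]

theorem statement12 (z α : ℝ) :
    (∑' k : ℕ, (-1 : ℂ) ^ k * besselJ (10 * k + 5) z * (Real.cos ((10 * k + 5) * α) : ℂ)) =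
      (1 / 10 : ℂ) * ∑ ℓ ∈ Finset.range 5, (Real.sin (z * Real.cos (α + 2 * π * ℓ / 5)) : ℂ) := by
  have h := (hasSum_nat_sum_range_sin_mul_cos z α (N := 5) (by norm_num)).mul_left (1 / 10)
  have hinj : Function.Injective (fun k : ℕ => 10 * k + 5) := fun a b hab => by
    simp only at hab; omega
  have h' := (hinj.hasSum_iff fun n hn => ?_).2 h
  · convert h'.tsum_eq using 1
    · refine tsum_congr fun k => ?_
      rw [Function.comp_apply, if_pos (by omega)]
      simp only [Nat.cast_add, Nat.cast_mul, Nat.cast_ofNat, sin_ten_mul_add_five_mul_pi_div_two]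
      push_cast
      ring
    · push_cast
      rfl
  · rw [Set.mem_range, not_exists] at hn
    refine mul_eq_zero_of_right _ (ite_eq_right_iff.2 fun h5 => ?_)
    obtain ⟨m, rfl⟩ : Even n := by
      have := hn (n / 10)
      rw [Nat.even_iff]
      omega
    rw [show ((m + m : ℕ) : ℝ) * π / 2 = m * π by push_cast; ring, Real.sin_nat_mul_pi]
    simp
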